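/- arXiv:2503.07665 — 2 statements merged into one kernel-verified Lean document; each statement's English description precedes it below -/
import Mathlib

section
/- Let G be a graph, 𝓑 a family of balls of G, and T a positive non-clashing teaching map for 𝓑. Let B = B_r(u) ∈ 𝓑 and suppose z₁, z₂, z₃ ∈ T(B) are three distinct vertices lying in pairwise disjoint, pairwise 'equivalent' sets in the following sense: for every vertex w of G with d(w, z_i) < d(w, z_j) for distinct i,j ∈ {1,2,3}, w lies in the connected component (of G minus a fixed separator) containing z_i, and these three components are pairwise disjoint. If u is not in the component containing z₃, then T' obtained from T by removing z₃ from T(B) (and unchanged otherwise) is still a positive non-clashing teaching map for 𝓑. -/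
open Classical in
/-- The ball of radius `r` around `v`: vertices reachable by a walk of length at most `r`. -/
def graphBall {V : Type*} (G : SimpleGraph V) (v : V) (r : ℕ) : Set V :=
  {w | ∃ p : G.Walk v w, p.length ≤ r}

/-- `T` is a positive teaching map for the family of balls `𝓑`. -/
def IsPositiveMap {V : Type*} (𝓑 : Set (Set V)) (T : Set V → Set V) : Prop :=
  ∀ B ∈ 𝓑, T B ⊆ B

/-- `T` is non-clashing for `𝓑`. -/
def IsNonClashing {V : Type*} (𝓑 : Set (Set V)) (T : Set V → Set V) : Prop :=
  ∀ B₁ ∈ 𝓑, ∀ B₂ ∈ 𝓑, B₁ ≠ B₂ → ∃ w ∈ T B₁ ∪ T B₂, w ∉ B₁ ∩ B₂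

/-!
A ball `B'` that contains `z₁` and `z₂` but not `z₃` has a center strictly closer to `z₁`
than to `z₃`, and strictly closer to `z₂` than to `z₃`; by the separation property the center
then lies in both of the disjoint components of `z₁` and `z₂`, which is impossible. Hence every
ball of `𝓑` missing `z₃` already misses `z₁` or `z₂`, and these two teachers of `B` take over
the role of `z₃` whenever `z₃` was the only witness separating `B` from another ball.
-/

section graphBall

variable {V : Type*} {G : SimpleGraph V} {v x y : V} {r : ℕ}

theorem reachable_center_of_mem_graphBall (hx : x ∈ graphBall G v r) : G.Reachable v x :=
  let ⟨p, _⟩ := hx; ⟨p⟩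

theorem dist_le_of_mem_graphBall (hx : x ∈ graphBall G v r) : G.dist v x ≤ r :=
  let ⟨p, hp⟩ := hx; (G.dist_le p).trans hp

theorem lt_dist_of_notMem_graphBall (hx : G.Reachable v x) (hxB : x ∉ graphBall G v r) :
    r < G.dist v x := by
  by_contra! h
  obtain ⟨p, hp⟩ := hx.exists_walk_length_eq_dist
  exact hxB ⟨p, hp ▸ h⟩

theorem reachable_of_mem_graphBall (hx : x ∈ graphBall G v r) (hy : y ∈ graphBall G v r) :
    G.Reachable x y :=
  (reachable_center_of_mem_graphBall hx).symm.trans (reachable_center_of_mem_graphBall hy)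

theorem mem_graphBall_of_separated {z₁ z₂ z₃ : V} {C₁ C₂ : Set V} (hC : Disjoint C₁ C₂)
    (hC₁ : ∀ w, G.dist w z₁ < G.dist w z₃ → w ∈ C₁)
    (hC₂ : ∀ w, G.dist w z₂ < G.dist w z₃ → w ∈ C₂) (h₁₃ : G.Reachable z₁ z₃)
    (hz₁ : z₁ ∈ graphBall G v r) (hz₂ : z₂ ∈ graphBall G v r) : z₃ ∈ graphBall G v r := by
  by_contra hz₃
  have hr : r < G.dist v z₃ :=
    lt_dist_of_notMem_graphBall ((reachable_center_of_mem_graphBall hz₁).trans h₁₃) hz₃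
  have hv₁ : v ∈ C₁ := hC₁ v ((dist_le_of_mem_graphBall hz₁).trans_lt hr)
  have hv₂ : v ∈ C₂ := hC₂ v ((dist_le_of_mem_graphBall hz₂).trans_lt hr)
  exact hC.notMem_of_mem_left hv₁ hv₂

end graphBall

section TeachingMap

variable {V : Type*} {𝓑 : Set (Set V)} {T : Set V → Set V} {B : Set V} {z : V}

theorem IsPositiveMap.diff_singleton (hpos : IsPositiveMap 𝓑 T) :
    IsPositiveMap 𝓑 (fun B' => if B' = B then T B \ {z} else T B') := by
  intro B' hB'
  dsimp only
  split_ifs with h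
  · exact h ▸ Set.sdiff_subset.trans (hpos B' hB')
  · exact hpos B' hB'

theorem IsNonClashing.diff_singleton (hnc : IsNonClashing 𝓑 T) (hB : B ∈ 𝓑)
    (hz : ∀ B' ∈ 𝓑, z ∉ B ∩ B' → ∃ w ∈ T B \ {z}, w ∉ B ∩ B') :
    IsNonClashing 𝓑 (fun B' => if B' = B then T B \ {z} else T B') := by
  have witness : ∀ B' ∈ 𝓑, B ≠ B' → ∃ w ∈ T B \ {z} ∪ T B', w ∉ B ∩ B' := by
    intro B' hB' hne
    obtain ⟨w, hw, hwB⟩ := hnc B hB B' hB' hne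
    by_cases hwz : w = z
    · obtain ⟨w', hw', hw'B⟩ := hz B' hB' (hwz ▸ hwB)
      exact ⟨w', Or.inl hw', hw'B⟩
    · exact ⟨w, hw.imp_left fun h => ⟨h, hwz⟩, hwB⟩
  intro B₁ hB₁ B₂ hB₂ hne
  by_cases h₁ : B₁ = B <;> by_cases h₂ : B₂ = B
  · exact absurd (h₁.trans h₂.symm) hne
  · subst h₁
    simpa [h₂] using witness B₂ hB₂ hne
  · subst h₂
    simpa [h₁, Set.union_comm, Set.inter_comm] using witness B₁ hB₁ (Ne.symm hne)
  · simpa [h₁, h₂] using hnc B₁ hB₁ B₂ hB₂ hne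

end TeachingMap

open scoped Classical in
theorem stmt_4_general {V : Type*} (G : SimpleGraph V) (𝓑 : Set (Set V))
    (h𝓑 : ∀ B ∈ 𝓑, ∃ (v : V) (r : ℕ), B = graphBall G v r)
    (T : Set V → Set V) (hpos : IsPositiveMap 𝓑 T) (hnc : IsNonClashing 𝓑 T)
    (u : V) (r : ℕ) (B : Set V) (hB : B = graphBall G u r) (hB𝓑 : B ∈ 𝓑)
    (z₁ z₂ z₃ : V) (hz₁ : z₁ ∈ T B) (hz₂ : z₂ ∈ T B) (hz₃ : z₃ ∈ T B)
    (h13 : z₁ ≠ z₃) (h23 : z₂ ≠ z₃)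
    (C₁ C₂ C₃ : Set V)
    (hd12 : Disjoint C₁ C₂)
    (hkey : ∀ (w : V) (i j : Fin 3), i ≠ j →
      G.dist w (![z₁, z₂, z₃] i) < G.dist w (![z₁, z₂, z₃] j) →
      w ∈ ![C₁, C₂, C₃] i) :
    IsPositiveMap 𝓑 (fun B' => if B' = B then T B \ {z₃} else T B') ∧
    IsNonClashing 𝓑 (fun B' => if B' = B then T B \ {z₃} else T B') := by
  refine ⟨hpos.diff_singleton, hnc.diff_singleton hB𝓑 fun B' hB' hz₃B' => ?_⟩
  have hz₃B : z₃ ∈ B := hpos B hB𝓑 hz₃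
  have h₁₃ : G.Reachable z₁ z₃ :=
    reachable_of_mem_graphBall (hB ▸ hpos B hB𝓑 hz₁) (hB ▸ hz₃B)
  by_contra! hcover
  obtain ⟨v, r', rfl⟩ := h𝓑 B' hB'
  exact hz₃B' ⟨hz₃B, mem_graphBall_of_separated hd12 (fun w => hkey w 0 2 (by decide))
    (fun w => hkey w 1 2 (by decide)) h₁₃ (hcover z₁ ⟨hz₁, h13⟩).2 (hcover z₂ ⟨hz₂, h23⟩).2⟩

open scoped Classical in
/-- Removing one of three equivalent vertices from a teaching set keeps the map
positive and non-clashing, provided the center is outside the third component. -/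
theorem stmt_4 {V : Type*} (G : SimpleGraph V) (𝓑 : Set (Set V))
    (h𝓑 : ∀ B ∈ 𝓑, ∃ (v : V) (r : ℕ), B = graphBall G v r)
    (T : Set V → Set V) (hpos : IsPositiveMap 𝓑 T) (hnc : IsNonClashing 𝓑 T)
    (u : V) (r : ℕ) (B : Set V) (hB : B = graphBall G u r) (hB𝓑 : B ∈ 𝓑)
    (z₁ z₂ z₃ : V) (hz₁ : z₁ ∈ T B) (hz₂ : z₂ ∈ T B) (hz₃ : z₃ ∈ T B)
    (h12 : z₁ ≠ z₂) (h13 : z₁ ≠ z₃) (h23 : z₂ ≠ z₃)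
    (C₁ C₂ C₃ : Set V) (hzC₁ : z₁ ∈ C₁) (hzC₂ : z₂ ∈ C₂) (hzC₃ : z₃ ∈ C₃)
    (hd12 : Disjoint C₁ C₂) (hd13 : Disjoint C₁ C₃) (hd23 : Disjoint C₂ C₃)
    (hkey : ∀ (w : V) (i j : Fin 3), i ≠ j →
      G.dist w (![z₁, z₂, z₃] i) < G.dist w (![z₁, z₂, z₃] j) →
      w ∈ ![C₁, C₂, C₃] i)
    (hu : u ∉ C₃) :
    IsPositiveMap 𝓑 (fun B' => if B' = B then T B \ {z₃} else T B') ∧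
    IsNonClashing 𝓑 (fun B' => if B' = B then T B \ {z₃} else T B') :=
  stmt_4_general G 𝓑 h𝓑 T hpos hnc u r B hB hB𝓑 z₁ z₂ z₃ hz₁ hz₂ hz₃ h13 h23 C₁ C₂ C₃ hd12 hkey
end

section
/- Let G be a graph, G' an induced subgraph of G, X ⊆ V(G') a vertex set, and suppose that for every connected component H of G − X, either V(H) ⊆ V(G'), or V(H) ∩ V(G') = ∅ and there exists a component H' of G − X with V(H') ⊆ V(G') and an isomorphism α from H to H' preserving adjacency to X. Then for all u, v ∈ V(G'), the distance between u and v in G' equals their distance in G. -/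
/-- The support of a connected component of `G − X`, as a set of vertices of `G`. -/
def compSupp {V : Type*} (G : SimpleGraph V) (X : Set V)
    (c : (G.induce (Xᶜ : Set V)).ConnectedComponent) : Set V :=
  Subtype.val '' c.supp

/-!
Every component `H` of `G − X` that leaves `S` can be folded onto its copy `H' ⊆ S`; together
with the identity on `X` and on the components inside `S`, these folds form a graph homomorphism
`G →g G[S]` that fixes `S` pointwise. A retraction onto an induced subgraph cannot shorten any
distance, so distances in `G[S]` and in `G` agree.
-/

namespace SimpleGraph

variable {V W : Type*} {G : SimpleGraph V} {H : SimpleGraph W}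

lemma Hom.edist_map_le (f : G →g H) (u v : V) : H.edist (f u) (f v) ≤ G.edist u v := by
  by_cases huv : G.Reachable u v
  · obtain ⟨p, hp⟩ := huv.exists_walk_length_eq_edist
    calc H.edist (f u) (f v) ≤ (p.map f).length := edist_le _
      _ = G.edist u v := by rw [Walk.length_map, hp]
  · rw [edist_eq_top_of_not_reachable huv]
    exact le_top

lemma edist_induce_eq_of_retraction {S : Set V} (r : G →g G.induce S) (hr : ∀ v : S, r v = v)
    (u v : S) : (G.induce S).edist u v = G.edist u v := by
  apply le_antisymm
  · simpa only [hr] using r.edist_map_le u v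
  · exact (Embedding.induce S).toHom.edist_map_le u v

lemma dist_induce_eq_of_retraction {S : Set V} (r : G →g G.induce S) (hr : ∀ v : S, r v = v)
    (u v : S) : (G.induce S).dist u v = G.dist u v := by
  rw [dist, dist, edist_induce_eq_of_retraction r hr]

lemma mem_compSupp_connectedComponentMk {X : Set V} {v : V} (hv : v ∉ X) :
    v ∈ compSupp G X ((G.induce Xᶜ).connectedComponentMk ⟨v, hv⟩) :=
  ⟨⟨v, hv⟩, rfl, rfl⟩

lemma connectedComponentMk_eq_of_adj {X : Set V} {u v : V} (hu : u ∉ X) (hv : v ∉ X)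
    (huv : G.Adj u v) :
    (G.induce Xᶜ).connectedComponentMk ⟨u, hu⟩ =
      (G.induce Xᶜ).connectedComponentMk ⟨v, hv⟩ :=
  ConnectedComponent.sound (Adj.reachable (G := G.induce Xᶜ) huv)

variable {X S : Set V}

structure IsComponentFold (G : SimpleGraph V) (X S : Set V)
    (c : (G.induce Xᶜ).ConnectedComponent) (g : V → V) : Prop where
  mapsTo : Set.MapsTo g (compSupp G X c) S
  eqOn : Set.EqOn g id (compSupp G X c ∩ S)
  adj : ∀ u ∈ compSupp G X c, ∀ w ∈ compSupp G X c, G.Adj u w → G.Adj (g u) (g w)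
  adj_of_mem : ∀ u ∈ compSupp G X c, ∀ x ∈ X, G.Adj u x → G.Adj (g u) x

lemma isComponentFold_id {c : (G.induce Xᶜ).ConnectedComponent} (hc : compSupp G X c ⊆ S) :
    IsComponentFold G X S c id where
  mapsTo := hc
  eqOn := fun _ _ ↦ rfl
  adj := fun _ _ _ _ h ↦ h
  adj_of_mem := fun _ _ _ _ h ↦ h

open Classical in
lemma exists_isComponentFold_of_copy {c c' : (G.induce Xᶜ).ConnectedComponent}
    (hc : compSupp G X c ∩ S = ∅) (hc' : compSupp G X c' ⊆ S)
    (α : compSupp G X c → compSupp G X c')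
    (hα : ∀ u v : compSupp G X c, G.Adj u v → G.Adj (α u) (α v))
    (hαX : ∀ u : compSupp G X c, ∀ x ∈ X, G.Adj u x → G.Adj (α u) x) :
    ∃ g, IsComponentFold G X S c g := by
  refine ⟨fun v ↦ if h : v ∈ compSupp G X c then α ⟨v, h⟩ else v, ?_, ?_, ?_, ?_⟩
  · intro v hv
    simpa only [dif_pos hv] using hc' (α ⟨v, hv⟩).2
  · intro v hv
    exact absurd hv (hc ▸ Set.notMem_empty v)
  · intro u hu w hw huw
    simpa only [dif_pos hu, dif_pos hw] using hα ⟨u, hu⟩ ⟨w, hw⟩ huw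
  · intro u hu x hx hux
    simpa only [dif_pos hu] using hαX ⟨u, hu⟩ x hx hux

section foldMap

variable (f : (G.induce Xᶜ).ConnectedComponent → V → V)

open Classical in
noncomputable def foldMap (v : V) : V :=
  if h : v ∈ X then v else f ((G.induce Xᶜ).connectedComponentMk ⟨v, h⟩) v

variable {f} {u v x : V}

lemma foldMap_of_mem (hv : v ∈ X) : foldMap f v = v := dif_pos hv

lemma foldMap_of_notMem (hv : v ∉ X) :
    foldMap f v = f ((G.induce Xᶜ).connectedComponentMk ⟨v, hv⟩) v := dif_neg hv

lemma foldMap_mem (hf : ∀ c, IsComponentFold G X S c (f c)) (hXS : X ⊆ S) (v : V) :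
    foldMap f v ∈ S := by
  by_cases hv : v ∈ X
  · rw [foldMap_of_mem hv]
    exact hXS hv
  · rw [foldMap_of_notMem hv]
    exact (hf _).mapsTo (mem_compSupp_connectedComponentMk hv)

lemma foldMap_eq_self (hf : ∀ c, IsComponentFold G X S c (f c)) (hv : v ∈ S) :
    foldMap f v = v := by
  by_cases hvX : v ∈ X
  · exact foldMap_of_mem hvX
  · rw [foldMap_of_notMem hvX]
    exact (hf _).eqOn ⟨mem_compSupp_connectedComponentMk hvX, hv⟩

lemma adj_foldMap_of_adj_of_mem (hf : ∀ c, IsComponentFold G X S c (f c)) (hx : x ∈ X)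
    (h : G.Adj v x) : G.Adj (foldMap f v) x := by
  by_cases hv : v ∈ X
  · rwa [foldMap_of_mem hv]
  · rw [foldMap_of_notMem hv]
    exact (hf _).adj_of_mem v (mem_compSupp_connectedComponentMk hv) x hx h

lemma foldMap_adj (hf : ∀ c, IsComponentFold G X S c (f c)) (h : G.Adj u v) :
    G.Adj (foldMap f u) (foldMap f v) := by
  by_cases hu : u ∈ X
  · rw [foldMap_of_mem hu]
    exact (adj_foldMap_of_adj_of_mem hf hu h.symm).symm
  by_cases hv : v ∈ X
  · rw [foldMap_of_mem hv]
    exact adj_foldMap_of_adj_of_mem hf hv h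
  have hcomp := connectedComponentMk_eq_of_adj hu hv h
  rw [foldMap_of_notMem hu, foldMap_of_notMem hv, hcomp]
  exact (hf _).adj u (hcomp ▸ mem_compSupp_connectedComponentMk hu) v
    (mem_compSupp_connectedComponentMk hv) h

noncomputable def foldRetraction (hf : ∀ c, IsComponentFold G X S c (f c)) (hXS : X ⊆ S) :
    G →g G.induce S where
  toFun v := ⟨foldMap f v, foldMap_mem hf hXS v⟩
  map_rel' h := foldMap_adj hf h

lemma foldRetraction_apply_coe (hf : ∀ c, IsComponentFold G X S c (f c)) (hXS : X ⊆ S) (v : S) :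
    foldRetraction hf hXS v = v :=
  Subtype.ext (foldMap_eq_self hf v.2)

end foldMap

end SimpleGraph

theorem stmt_9_general {V : Type*} (G : SimpleGraph V)
    (S X : Set V) (hXS : X ⊆ S)
    (hcomp : ∀ c : (G.induce (Xᶜ : Set V)).ConnectedComponent,
      compSupp G X c ⊆ S ∨
      (compSupp G X c ∩ S = ∅ ∧
        ∃ c' : (G.induce (Xᶜ : Set V)).ConnectedComponent,
          compSupp G X c' ⊆ S ∧
          ∃ α : (compSupp G X c) ≃ (compSupp G X c'),
            (∀ u v : compSupp G X c, G.Adj u v ↔ G.Adj (α u) (α v)) ∧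
            (∀ (u : compSupp G X c) (x : V), x ∈ X → (G.Adj u x ↔ G.Adj (α u) x)))) :
    ∀ u v : S, (G.induce S).dist u v = G.dist u v := by
  open SimpleGraph in
  choose f hf using fun c ↦ (hcomp c).elim (fun hc ↦ ⟨id, isComponentFold_id hc⟩)
    fun ⟨hc, _, hc', α, hα, hαX⟩ ↦ exists_isComponentFold_of_copy hc hc' α
      (fun u v ↦ (hα u v).1) (fun u x hx ↦ (hαX u x hx).1)
  exact dist_induce_eq_of_retraction (foldRetraction hf hXS) (foldRetraction_apply_coe hf hXS)

/-- If every component of `G − X` is either inside `G'` (induced on `S ⊇ X`), or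
disjoint from `S` with an isomorphic copy inside `S` (via an isomorphism preserving
adjacency to `X`), then distances in `G'` agree with distances in `G`. -/
theorem stmt_9 {V : Type*} [Fintype V] (G : SimpleGraph V) (hG : G.Connected)
    (S X : Set V) (hXS : X ⊆ S)
    (hcomp : ∀ c : (G.induce (Xᶜ : Set V)).ConnectedComponent,
      compSupp G X c ⊆ S ∨
      (compSupp G X c ∩ S = ∅ ∧
        ∃ c' : (G.induce (Xᶜ : Set V)).ConnectedComponent,
          compSupp G X c' ⊆ S ∧
          ∃ α : (compSupp G X c) ≃ (compSupp G X c'),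
            (∀ u v : compSupp G X c, G.Adj u v ↔ G.Adj (α u) (α v)) ∧
            (∀ (u : compSupp G X c) (x : V), x ∈ X → (G.Adj u x ↔ G.Adj (α u) x)))) :
    ∀ u v : S, (G.induce S).dist u v = G.dist u v :=
  stmt_9_general G S X hXS hcomp
end
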